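/- Let ρ = [v₁v₂v₃v₄] and ρ' = [v₁'v₂'v₃'v₄'] be unit rhombi in ℝ³ positioned so that v₁ = v₁' and |v₂ − v₂'| = |v₄ − v₄'| = 1. Then the two-component integral curve ρ ∪ ρ' is cobordant to the single hexagonal integral curve γ = [v₄ v₃ v₂ v₂' v₃' v₄']; a dome over ρ ∪ ρ' ∪ γ is furnished by the two unit triangles [v₁v₂v₂'] and [v₁v₄v₄'] together with the paired boundary edges. Consequently, if ρ ∪ ρ' is not orientably cobordant to any unit rhombus, then neither is the connected integral curve γ. -/

import Mathlib

/-
Common framework: integral curves (closed piecewise-linear curves in ℝ³ with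
unit edges, possibly with several components), domes (piecewise-linear
surfaces all of whose faces are unit equilateral triangles, not necessarily
embedded, described combinatorially by a finite set of triangles with a
gluing pairing of triangle sides), boundaries, orientability, cobordism and
unit rhombi.
-/

noncomputable section

/-- Euclidean 3-space. -/
abbrev E3 : Type := EuclideanSpace ℝ (Fin 3)

/-- An *integral curve*: a finite disjoint union of closed polygonal curves in
`ℝ³` all of whose edges have unit length.  Component `j` is the closed polygon
with cyclically ordered vertices `vert j 0, …, vert j (len j - 1)`. -/
structure IntegralCurve where
  c : ℕ
  len : Fin c → ℕ
  len_pos : ∀ j, 0 < len j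
  vert : Fin c → ℕ → E3
  periodic : ∀ j i, vert j (i + len j) = vert j i
  unit : ∀ j i, dist (vert j i) (vert j (i + 1)) = 1

/-- The length `|γ|` of an integral curve: its total number of edges. -/
def IntegralCurve.length (γ : IntegralCurve) : ℕ := ∑ j, γ.len j

/-- The multiset of (undirected) edges of an integral curve. -/
def IntegralCurve.edges (γ : IntegralCurve) : Multiset (Sym2 E3) :=
  ∑ j, (Multiset.range (γ.len j)).map (fun i => s(γ.vert j i, γ.vert j (i + 1)))

/-- A *dome*: a finite collection of unit equilateral triangles in `ℝ³`,
`face a 0, face a 1, face a 2` being the vertices of the `a`-th triangle,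
together with a gluing matching some triangle sides in pairs (so that the
underlying combinatorial object is a surface, not necessarily embedded or
immersed); glued sides must coincide geometrically.  Side `(a, i)` of face `a`
is the segment from `face a i` to `face a (i + 1)` (indices mod 3). -/
structure Dome where
  N : ℕ
  face : Fin N → Fin 3 → E3
  unit : ∀ a i, dist (face a i) (face a (i + 1)) = 1
  glue : Fin N × Fin 3 → Option (Fin N × Fin 3)
  glue_symm : ∀ e e', glue e = some e' → glue e' = some e
  glue_ne : ∀ e, glue e ≠ some e
  glue_geom : ∀ e e', glue e = some e' →
    s(face e.1 e.2, face e.1 (e.2 + 1)) = s(face e'.1 e'.2, face e'.1 (e'.2 + 1))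

/-- The boundary of a dome: the multiset of unglued triangle sides. -/
def Dome.boundary (D : Dome) : Multiset (Sym2 E3) :=
  (Finset.univ.filter fun e : Fin D.N × Fin 3 => D.glue e = none).val.map
    (fun e => s(D.face e.1 e.2, D.face e.1 (e.2 + 1)))

/-- The directed edge of a triangle side, w.r.t. a choice of orientations of
the faces. -/
def Dome.dirEdge (D : Dome) (ori : Fin D.N → Bool) (e : Fin D.N × Fin 3) : E3 × E3 :=
  if ori e.1 then (D.face e.1 e.2, D.face e.1 (e.2 + 1))
  else (D.face e.1 (e.2 + 1), D.face e.1 e.2)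

/-- A dome is orientable if its faces can be coherently oriented, i.e. glued
sides are traversed in opposite directions. -/
def Dome.Orientable (D : Dome) : Prop :=
  ∃ ori : Fin D.N → Bool, ∀ e e', D.glue e = some e' →
    D.dirEdge ori e = Prod.swap (D.dirEdge ori e')

/-- A unit rhombus `[v₀v₁v₂v₃]`: a closed quadrilateral with four unit sides. -/
def UnitRhombus (v : Fin 4 → E3) : Prop := ∀ i, dist (v i) (v (i + 1)) = 1

/-- The multiset of edges of a closed quadrilateral `[v₀v₁v₂v₃]`. -/
def rhombusEdges (v : Fin 4 → E3) : Multiset (Sym2 E3) :=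
  (Finset.univ : Finset (Fin 4)).val.map (fun i => s(v i, v (i + 1)))

/-- An integral curve is planar if it lies in a plane `H ⊂ ℝ³`. -/
def IntegralCurve.Planar (γ : IntegralCurve) : Prop :=
  ∃ (w : E3) (r : ℝ), w ≠ 0 ∧ ∀ j i, (inner ℝ w (γ.vert j i) : ℝ) = r

/-- An integral curve is 2-packing if all of its vertices lie within distance
`2` of one of its vertices (the packing center). -/
def IntegralCurve.TwoPacking (γ : IntegralCurve) : Prop :=
  ∃ (j₀ : Fin γ.c) (i₀ : ℕ), ∀ j i, dist (γ.vert j₀ i₀) (γ.vert j i) < 2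


/-! ### Auxiliary machinery -/

section ApexSec
open RealInnerProductSpace
lemma exists_orth (w : E3) (hw : w ≠ 0) : ∃ u : E3, ‖u‖ = 1 ∧ ⟪w, u⟫ = 0 := by
  have h1 : (ℝ ∙ w)ᗮ ≠ ⊥ := by
    intro h
    have htop : (ℝ ∙ w) = ⊤ := by
      have := Submodule.orthogonal_orthogonal (𝕜 := ℝ) (ℝ ∙ w)
      rw [h] at this
      simpa using this.symm
    have hr : Module.finrank ℝ (ℝ ∙ w : Submodule ℝ E3) = 3 := by
      rw [htop]; simp [finrank_euclideanSpace (𝕜 := ℝ) (ι := Fin 3)]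
    have := finrank_span_singleton (K := ℝ) hw
    omega
  obtain ⟨u, hu, hune⟩ := Submodule.exists_mem_ne_zero_of_ne_bot h1
  refine ⟨‖u‖⁻¹ • u, ?_, ?_⟩
  · simp [norm_smul, hune]
  · have h0 : ⟪w, u⟫ = 0 := by
      have := (Submodule.mem_orthogonal (ℝ ∙ w) u).mp hu w (Submodule.mem_span_singleton_self w)
      simpa [real_inner_comm] using this
    simp [inner_smul_right, h0]

lemma exists_apex (a b : E3) (h : dist a b = 1) : ∃ c, dist a c = 1 ∧ dist b c = 1 := by
  have hab : a ≠ b := by intro e; rw [e] at h; simp at h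
  obtain ⟨u, hu1, hu0⟩ := exists_orth (a - b) (sub_ne_zero_of_ne hab)
  set c : E3 := midpoint ℝ a b + (Real.sqrt 3 / 2) • u with hc
  have hnormab : ‖a - b‖ = 1 := by rwa [dist_eq_norm] at h
  have key : ∀ x : E3, x - midpoint ℝ a b = (2:ℝ)⁻¹ • (a-b) ∨ x - midpoint ℝ a b = -((2:ℝ)⁻¹ • (a-b)) → dist x c = 1 := by
    intro x hx
    have hxo : ⟪x - midpoint ℝ a b, (Real.sqrt 3 / 2) • u⟫ = 0 := by
      rcases hx with hx | hx <;> rw [hx] <;>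
        simp [inner_smul_left, inner_smul_right, hu0]
    have hxc : x - c = (x - midpoint ℝ a b) - (Real.sqrt 3 / 2) • u := by
      rw [hc]; abel
    have hnx : ‖x - midpoint ℝ a b‖ = 2⁻¹ := by
      rcases hx with hx | hx <;> rw [hx] <;>
        simp [norm_smul, hnormab]
    have hsq : ‖x - c‖ ^ 2 = 1 := by
      rw [hxc, norm_sub_sq_real, hxo, hnx]
      have h3 : ‖(Real.sqrt 3 / 2) • u‖ ^ 2 = 3 / 4 := by
        rw [norm_smul, hu1]
        have : |Real.sqrt 3 / 2| = Real.sqrt 3 / 2 := by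
          rw [abs_of_nonneg]; positivity
        rw [Real.norm_eq_abs, this, mul_one, div_pow, Real.sq_sqrt (by norm_num : (3:ℝ) ≥ 0)]
        norm_num
      rw [h3]; norm_num
    rw [dist_eq_norm]
    nlinarith [norm_nonneg (x - c)]
  have hmid : midpoint ℝ a b = (2:ℝ)⁻¹ • (a + b) := by
    rw [midpoint_eq_smul_add, invOf_eq_inv]
  refine ⟨c, ?_, ?_⟩
  · apply key; left
    rw [hmid]; module
  · apply key; right
    rw [hmid]; module

end ApexSec

lemma exists_two_preimages {α β : Type*} [DecidableEq α] [DecidableEq β]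
    (t : Multiset α) (ht : t.Nodup) (f : α → β) (x y : β)
    (h : ({x, y} : Multiset β) ≤ t.map f) :
    ∃ a b, a ∈ t ∧ b ∈ t ∧ a ≠ b ∧ f a = x ∧ f b = y := by
  have hx : x ∈ t.map f := Multiset.mem_of_le h (by simp)
  obtain ⟨a, ha, hfa⟩ := Multiset.mem_map.mp hx
  have hmap : t.map f = x ::ₘ (t.erase a).map f := by
    conv_lhs => rw [(Multiset.cons_erase ha).symm]
    rw [Multiset.map_cons, hfa]
  rw [hmap, Multiset.insert_eq_cons] at h
  have hy : y ∈ (t.erase a).map f :=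
    Multiset.singleton_le.mp ((Multiset.cons_le_cons_iff x).mp h)
  obtain ⟨b, hb, hfb⟩ := Multiset.mem_map.mp hy
  refine ⟨a, b, ha, Multiset.mem_of_mem_erase hb, ?_, hfa, hfb⟩
  rintro rfl
  exact Multiset.Nodup.notMem_erase ht hb


def twoFaces (T U : Fin 3 → E3) (hT : ∀ i, dist (T i) (T (i+1)) = 1)
    (hU : ∀ i, dist (U i) (U (i+1)) = 1) : Dome where
  N := 2
  face := ![T, U]
  unit := by intro a i; fin_cases a <;> simp [hT i, hU i]
  glue := fun _ => none
  glue_symm := by simp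
  glue_ne := by simp
  glue_geom := by simp


def tglue : Fin 10 × Fin 3 → Option (Fin 10 × Fin 3) := fun e =>
  if e.1.val ≤ 1 ∨ e.2 = 0 then none
  else if e.1.val % 2 = 0 then some (e.1 + 1, e.2) else some (e.1 - 1, e.2)

def tentDome (T U A B C W : Fin 3 → E3)
    (hT : ∀ i, dist (T i) (T (i+1)) = 1) (hU : ∀ i, dist (U i) (U (i+1)) = 1)
    (hA : ∀ i, dist (A i) (A (i+1)) = 1) (hB : ∀ i, dist (B i) (B (i+1)) = 1)
    (hC : ∀ i, dist (C i) (C (i+1)) = 1) (hW : ∀ i, dist (W i) (W (i+1)) = 1) : Dome where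
  N := 10
  face := ![T, U, A, A, B, B, C, C, W, W]
  unit := by
    intro a i
    fin_cases a <;> first | exact hT i | exact hU i | exact hA i | exact hB i | exact hC i | exact hW i
  glue := tglue
  glue_symm := by decide
  glue_ne := by decide
  glue_geom := by
    rintro ⟨a, i⟩ ⟨a', i'⟩ h
    have hidx : i' = i ∧ (![T, U, A, A, B, B, C, C, W, W] : Fin 10 → Fin 3 → E3) a'
        = ![T, U, A, A, B, B, C, C, W, W] a := by
      have : i' = i ∧ ((a = 2 ∧ a' = 3) ∨ (a = 3 ∧ a' = 2) ∨ (a = 4 ∧ a' = 5) ∨ (a = 5 ∧ a' = 4)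
          ∨ (a = 6 ∧ a' = 7) ∨ (a = 7 ∧ a' = 6) ∨ (a = 8 ∧ a' = 9) ∨ (a = 9 ∧ a' = 8)) := by
        revert h; revert a a' i i'; decide
      obtain ⟨hi, hp⟩ := this
      refine ⟨hi, ?_⟩
      rcases hp with ⟨rfl, rfl⟩|⟨rfl, rfl⟩|⟨rfl, rfl⟩|⟨rfl, rfl⟩|⟨rfl, rfl⟩|⟨rfl, rfl⟩|⟨rfl, rfl⟩|⟨rfl, rfl⟩ <;> rfl
    obtain ⟨rfl, hf⟩ := hidx
    simp only [hf]



section Attach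
variable (D : Dome) (e₁ e₂ : Fin D.N × Fin 3) (x₁ y₁ z₁ x₂ y₂ z₂ : E3)

/-- embedding of old face indices -/
def cst : Fin D.N → Fin (D.N + 2) := Fin.castLE (Nat.le_add_right D.N 2)

def nIdx (k : Fin 2) : Fin (D.N + 2) := ⟨D.N + k, by omega⟩

def aFace : Fin (D.N + 2) → Fin 3 → E3 := fun a =>
  if h : (a : ℕ) < D.N then D.face ⟨a, h⟩
  else if (a : ℕ) = D.N then ![x₁, y₁, z₁] else ![x₂, y₂, z₂]

def aGlue : Fin (D.N + 2) × Fin 3 → Option (Fin (D.N + 2) × Fin 3) := fun e =>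
  if h : (e.1 : ℕ) < D.N then
    if (⟨e.1, h⟩, e.2) = e₁ then some (nIdx D 0, 0)
    else if (⟨e.1, h⟩, e.2) = e₂ then some (nIdx D 1, 0)
    else Option.map (fun f => (cst D f.1, f.2)) (D.glue (⟨e.1, h⟩, e.2))
  else if (e.1 : ℕ) = D.N then
    (if e.2 = 0 then some (cst D e₁.1, e₁.2) else none)
  else
    (if e.2 = 0 then some (cst D e₂.1, e₂.2) else none)

lemma cst_coe (a : Fin D.N) : ((cst D a : Fin (D.N+2)) : ℕ) = a := rfl

lemma aFace_cst (a : Fin D.N) : aFace D x₁ y₁ z₁ x₂ y₂ z₂ (cst D a) = D.face a := by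
  simp only [aFace, cst_coe]
  exact dif_pos a.2

lemma aFace_n0 : aFace D x₁ y₁ z₁ x₂ y₂ z₂ (nIdx D 0) = ![x₁, y₁, z₁] := by
  simp [aFace, nIdx]

lemma aFace_n1 : aFace D x₁ y₁ z₁ x₂ y₂ z₂ (nIdx D 1) = ![x₂, y₂, z₂] := by
  simp [aFace, nIdx]

lemma aGlue_cst (f : Fin D.N × Fin 3) :
    aGlue D e₁ e₂ (cst D f.1, f.2) =
      if f = e₁ then some (nIdx D 0, 0)
      else if f = e₂ then some (nIdx D 1, 0)
      else Option.map (fun g => (cst D g.1, g.2)) (D.glue f) := by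
  have h : ((cst D f.1 : Fin (D.N+2)) : ℕ) < D.N := f.1.2
  simp only [aGlue, dif_pos h]
  have he : (⟨(cst D f.1 : Fin (D.N+2)), h⟩, f.2) = f := by
    ext <;> simp [cst_coe]
  rw [he]

lemma aGlue_n0 (i : Fin 3) :
    aGlue D e₁ e₂ (nIdx D 0, i) = if i = 0 then some (cst D e₁.1, e₁.2) else none := by
  simp [aGlue, nIdx]

lemma aGlue_n1 (i : Fin 3) :
    aGlue D e₁ e₂ (nIdx D 1, i) = if i = 0 then some (cst D e₂.1, e₂.2) else none := by
  have h1 : ¬ ((nIdx D 1 : Fin (D.N+2)) : ℕ) < D.N := by simp [nIdx]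
  have h2 : ¬ ((nIdx D 1 : Fin (D.N+2)) : ℕ) = D.N := by simp [nIdx]
  simp [aGlue, h1, h2]

/-- every index is old or one of the two new ones -/
lemma idx_cases (a : Fin (D.N + 2)) :
    (∃ b : Fin D.N, a = cst D b) ∨ a = nIdx D 0 ∨ a = nIdx D 1 := by
  rcases lt_trichotomy (a : ℕ) D.N with h | h | h
  · exact Or.inl ⟨⟨a, h⟩, by ext; simp [cst_coe]⟩
  · exact Or.inr (Or.inl (by ext; simp [nIdx, h]))
  · refine Or.inr (Or.inr ?_)
    ext
    simp only [nIdx]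
    omega

lemma cst_inj (a b : Fin D.N) (h : cst D a = cst D b) : a = b := by
  have := congrArg Fin.val h
  exact Fin.ext this

lemma cst_ne_n0 (a : Fin D.N) : cst D a ≠ nIdx D 0 := by
  intro h
  have := congrArg Fin.val h
  simp [cst_coe, nIdx] at this
  omega
lemma cst_ne_n1 (a : Fin D.N) : cst D a ≠ nIdx D 1 := by
  intro h
  have := congrArg Fin.val h
  simp [cst_coe, nIdx] at this
  omega
lemma n0_ne_n1 : nIdx D 0 ≠ nIdx D 1 := by
  intro h
  have := congrArg Fin.val h
  simp [nIdx] at this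

variable (hne : e₁ ≠ e₂) (hg₁ : D.glue e₁ = none) (hg₂ : D.glue e₂ = none)
  (hs₁ : s(D.face e₁.1 e₁.2, D.face e₁.1 (e₁.2+1)) = s(x₁, y₁))
  (hs₂ : s(D.face e₂.1 e₂.2, D.face e₂.1 (e₂.2+1)) = s(x₂, y₂))
  (hyz₁ : dist y₁ z₁ = 1) (hzx₁ : dist z₁ x₁ = 1)
  (hyz₂ : dist y₂ z₂ = 1) (hzx₂ : dist z₂ x₂ = 1)

include hs₁ in
lemma hxy₁ : dist x₁ y₁ = 1 := by
  rcases Sym2.eq_iff.mp hs₁ with ⟨ha, hb⟩ | ⟨ha, hb⟩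
  · rw [← ha, ← hb]; exact D.unit e₁.1 e₁.2
  · rw [← ha, ← hb, dist_comm]; exact D.unit e₁.1 e₁.2

include hs₂ in
lemma hxy₂ : dist x₂ y₂ = 1 := by
  rcases Sym2.eq_iff.mp hs₂ with ⟨ha, hb⟩ | ⟨ha, hb⟩
  · rw [← ha, ← hb]; exact D.unit e₂.1 e₂.2
  · rw [← ha, ← hb, dist_comm]; exact D.unit e₂.1 e₂.2

include hg₁ hg₂ in
/-- glue target is never `e₁` or `e₂` -/
lemma glue_ne_e₁ (f f' : Fin D.N × Fin 3) (h : D.glue f = some f') : f' ≠ e₁ ∧ f' ≠ e₂ := by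
  constructor <;> rintro rfl
  · rw [D.glue_symm _ _ h] at hg₁; exact Option.some_ne_none _ hg₁
  · rw [D.glue_symm _ _ h] at hg₂; exact Option.some_ne_none _ hg₂

def attachTwo : Dome where
  N := D.N + 2
  face := aFace D x₁ y₁ z₁ x₂ y₂ z₂
  unit := by
    intro a i
    rcases idx_cases D a with ⟨b, rfl⟩ | rfl | rfl
    · rw [aFace_cst]; exact D.unit b i
    · rw [aFace_n0]
      fin_cases i
      · exact hxy₁ D e₁ x₁ y₁ hs₁
      · exact hyz₁
      · exact hzx₁
    · rw [aFace_n1]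
      fin_cases i
      · exact hxy₂ D e₂ x₂ y₂ hs₂
      · exact hyz₂
      · exact hzx₂
  glue := aGlue D e₁ e₂
  glue_symm := by
    rintro ⟨a, i⟩ e' h
    rcases idx_cases D a with ⟨b, rfl⟩ | rfl | rfl
    · rw [aGlue_cst D e₁ e₂ (b, i)] at h
      split_ifs at h with hb1 hb2
      · simp only [Option.some.injEq] at h
        subst h
        rw [aGlue_n0, if_pos rfl, ← hb1]
      · simp only [Option.some.injEq] at h
        subst h
        rw [aGlue_n1, if_pos rfl, ← hb2]
      · obtain ⟨f, hf, rfl⟩ := Option.map_eq_some_iff.mp h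
        rw [aGlue_cst D e₁ e₂ f]
        obtain ⟨hne1, hne2⟩ := glue_ne_e₁ D e₁ e₂ hg₁ hg₂ (b, i) f hf
        rw [if_neg hne1, if_neg hne2, D.glue_symm _ _ hf]
        rfl
    · rw [aGlue_n0] at h
      split_ifs at h with hi
      · simp only [Option.some.injEq] at h
        subst h
        rw [aGlue_cst D e₁ e₂ e₁, if_pos rfl, hi]
    · rw [aGlue_n1] at h
      split_ifs at h with hi
      · simp only [Option.some.injEq] at h
        subst h
        rw [aGlue_cst D e₁ e₂ e₂, if_neg (Ne.symm hne), if_pos rfl, hi]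
  glue_ne := by
    rintro ⟨a, i⟩ h
    rcases idx_cases D a with ⟨b, rfl⟩ | rfl | rfl
    · rw [aGlue_cst D e₁ e₂ (b, i)] at h
      split_ifs at h with hb1 hb2
      · simp only [Option.some.injEq] at h
        exact cst_ne_n0 D b (congrArg Prod.fst h).symm
      · simp only [Option.some.injEq] at h
        exact cst_ne_n1 D b (congrArg Prod.fst h).symm
      · obtain ⟨f, hf, hfe⟩ := Option.map_eq_some_iff.mp h
        have h1 : f.1 = b := cst_inj D _ _ (congrArg Prod.fst hfe)
        have h2 : f.2 = i := congrArg Prod.snd hfe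
        have hfeq : f = (b, i) := Prod.ext h1 h2
        exact D.glue_ne (b, i) (by rw [hf, hfeq])
    · rw [aGlue_n0] at h
      split_ifs at h with hi
      · simp only [Option.some.injEq] at h
        exact cst_ne_n0 D e₁.1 (congrArg Prod.fst h)
    · rw [aGlue_n1] at h
      split_ifs at h with hi
      · simp only [Option.some.injEq] at h
        exact cst_ne_n1 D e₂.1 (congrArg Prod.fst h)
  glue_geom := by
    rintro ⟨a, i⟩ e' h
    rcases idx_cases D a with ⟨b, rfl⟩ | rfl | rfl
    · rw [aGlue_cst D e₁ e₂ (b, i)] at h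
      split_ifs at h with hb1 hb2
      · simp only [Option.some.injEq] at h
        subst h
        simp only [aFace_cst, aFace_n0]
        have h1 : b = e₁.1 := congrArg Prod.fst hb1
        have h2 : i = e₁.2 := congrArg Prod.snd hb1
        subst h1; subst h2
        rw [hs₁]
        rfl
      · simp only [Option.some.injEq] at h
        subst h
        simp only [aFace_cst, aFace_n1]
        have h1 : b = e₂.1 := congrArg Prod.fst hb2
        have h2 : i = e₂.2 := congrArg Prod.snd hb2
        subst h1; subst h2
        rw [hs₂]
        rfl
      · obtain ⟨f, hf, rfl⟩ := Option.map_eq_some_iff.mp h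
        simp only [aFace_cst]
        exact D.glue_geom (b, i) f hf
    · rw [aGlue_n0] at h
      split_ifs at h with hi
      · simp only [Option.some.injEq] at h
        subst h
        subst hi
        simp only [aFace_cst, aFace_n0]
        simp only [Matrix.cons_val_zero, Matrix.cons_val_one, Matrix.head_cons,
          show ((0:Fin 3) + 1) = 1 from rfl]
        exact hs₁.symm
    · rw [aGlue_n1] at h
      split_ifs at h with hi
      · simp only [Option.some.injEq] at h
        subst h
        subst hi
        simp only [aFace_cst, aFace_n1]
        simp only [Matrix.cons_val_zero, Matrix.cons_val_one, Matrix.head_cons,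
          show ((0:Fin 3) + 1) = 1 from rfl]
        exact hs₂.symm

def embF : (Fin D.N × Fin 3) ↪ (Fin (D.N + 2) × Fin 3) :=
  ⟨fun f => (cst D f.1, f.2), by
    rintro ⟨a, i⟩ ⟨b, j⟩ h
    have h1 : cst D a = cst D b := congrArg Prod.fst h
    have h2 : i = j := congrArg Prod.snd h
    exact Prod.ext (cst_inj D _ _ h1) h2⟩

def F4 : Finset (Fin (D.N + 2) × Fin 3) :=
  ⟨{(nIdx D 0, 1), (nIdx D 0, 2), (nIdx D 1, 1), (nIdx D 1, 2)}, by
    have hn := n0_ne_n1 D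
    simp [Multiset.nodup_cons, Prod.ext_iff, hn, hn.symm]⟩

include hne hg₁ hg₂ hs₁ hs₂ hyz₁ hzx₁ hyz₂ hzx₂ in
lemma attachTwo_boundary :
    (attachTwo D e₁ e₂ x₁ y₁ z₁ x₂ y₂ z₂ hne hg₁ hg₂ hs₁ hs₂ hyz₁ hzx₁ hyz₂ hzx₂).boundary
        + {s(x₁, y₁), s(x₂, y₂)}
      = D.boundary + {s(y₁, z₁), s(z₁, x₁), s(y₂, z₂), s(z₂, x₂)} := by
  classical
  set A := attachTwo D e₁ e₂ x₁ y₁ z₁ x₂ y₂ z₂ hne hg₁ hg₂ hs₁ hs₂ hyz₁ hzx₁ hyz₂ hzx₂ with hA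
  set S : Finset (Fin D.N × Fin 3) :=
    Finset.univ.filter (fun e : Fin D.N × Fin 3 => D.glue e = none) with hS
  have hAface : A.face = aFace D x₁ y₁ z₁ x₂ y₂ z₂ := rfl
  have he₁S : e₁ ∈ S := Finset.mem_filter.mpr ⟨Finset.mem_univ _, hg₁⟩
  have he₂S : e₂ ∈ S := Finset.mem_filter.mpr ⟨Finset.mem_univ _, hg₂⟩
  -- the filtered set of the attached dome
  have hfil : Finset.univ.filter (fun e : Fin (D.N + 2) × Fin 3 => aGlue D e₁ e₂ e = none)
      = ((S.erase e₁).erase e₂).map (embF D) ∪ F4 D := by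
    ext ⟨a, i⟩
    simp only [Finset.mem_filter, Finset.mem_univ, true_and, Finset.mem_union, Finset.mem_map,
      Finset.mem_erase, hS]
    rcases idx_cases D a with ⟨b, rfl⟩ | rfl | rfl
    · rw [aGlue_cst D e₁ e₂ (b, i)]
      constructor
      · intro h
        split_ifs at h with hb1 hb2
        left
        refine ⟨(b, i), ⟨hb2, hb1, ?_⟩, rfl⟩
        exact Option.map_eq_none_iff.mp h
      · rintro (⟨f, ⟨hf2, hf1, hf0⟩, hfe⟩ | hmem)
        · have : f = (b, i) := by
            have h1 := congrArg Prod.fst hfe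
            have h2 := congrArg Prod.snd hfe
            exact Prod.ext (cst_inj D _ _ h1) h2
          subst this
          rw [if_neg hf1, if_neg hf2, hf0]
          rfl
        · exfalso
          have : (cst D b, i) ∈ F4 D := hmem
          simp only [F4, Finset.mem_mk, Multiset.insert_eq_cons, Multiset.mem_cons,
            Multiset.mem_singleton, Prod.ext_iff] at this
          rcases this with ⟨h', _⟩ | ⟨h', _⟩ | ⟨h', _⟩ | ⟨h', _⟩
          · exact cst_ne_n0 D b h'
          · exact cst_ne_n0 D b h'
          · exact cst_ne_n1 D b h'
          · exact cst_ne_n1 D b h'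
    · rw [aGlue_n0]
      constructor
      · intro h
        split_ifs at h with hi
        right
        show _ ∈ F4 D
        simp only [F4, Finset.mem_mk, Multiset.insert_eq_cons, Multiset.mem_cons,
          Multiset.mem_singleton]
        fin_cases i
        · exact absurd rfl hi
        · exact Or.inl rfl
        · exact Or.inr (Or.inl rfl)
      · rintro (⟨f, _, hfe⟩ | hmem)
        · exfalso
          have h' := congrArg Prod.fst hfe
          exact cst_ne_n0 D f.1 h'
        · have : (nIdx D 0, i) ∈ F4 D := hmem
          simp only [F4, Finset.mem_mk, Multiset.insert_eq_cons, Multiset.mem_cons,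
            Multiset.mem_singleton, Prod.ext_iff] at this
          have hn := n0_ne_n1 D
          rcases this with ⟨_, h2⟩ | ⟨_, h2⟩ | ⟨h1, _⟩ | ⟨h1, _⟩
          · subst h2; rw [if_neg (by decide)]
          · subst h2; rw [if_neg (by decide)]
          · exact absurd h1 hn
          · exact absurd h1 hn
    · rw [aGlue_n1]
      constructor
      · intro h
        split_ifs at h with hi
        right
        show _ ∈ F4 D
        simp only [F4, Finset.mem_mk, Multiset.insert_eq_cons, Multiset.mem_cons,
          Multiset.mem_singleton]
        fin_cases i
        · exact absurd rfl hi
        · exact Or.inr (Or.inr (Or.inl rfl))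
        · exact Or.inr (Or.inr (Or.inr rfl))
      · rintro (⟨f, _, hfe⟩ | hmem)
        · exfalso
          have h' := congrArg Prod.fst hfe
          exact cst_ne_n1 D f.1 h'
        · have : (nIdx D 1, i) ∈ F4 D := hmem
          simp only [F4, Finset.mem_mk, Multiset.insert_eq_cons, Multiset.mem_cons,
            Multiset.mem_singleton, Prod.ext_iff] at this
          have hn := n0_ne_n1 D
          rcases this with ⟨h1, _⟩ | ⟨h1, _⟩ | ⟨_, h2⟩ | ⟨_, h2⟩
          · exact absurd h1.symm hn
          · exact absurd h1.symm hn
          · subst h2; rw [if_neg (by decide)]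
          · subst h2; rw [if_neg (by decide)]
  -- disjointness
  have hdisj : Disjoint (((S.erase e₁).erase e₂).map (embF D)) (F4 D) := by
    rw [Finset.disjoint_left]
    rintro ⟨a, i⟩ hmem hmem'
    obtain ⟨f, _, hfe⟩ := Finset.mem_map.mp hmem
    simp only [F4, Finset.mem_mk, Multiset.insert_eq_cons, Multiset.mem_cons,
      Multiset.mem_singleton, Prod.ext_iff] at hmem'
    have h1 := congrArg Prod.fst hfe
    rcases hmem' with ⟨h', _⟩ | ⟨h', _⟩ | ⟨h', _⟩ | ⟨h', _⟩
    · exact cst_ne_n0 D f.1 (h1.trans h')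
    · exact cst_ne_n0 D f.1 (h1.trans h')
    · exact cst_ne_n1 D f.1 (h1.trans h')
    · exact cst_ne_n1 D f.1 (h1.trans h')
  -- boundary computation
  have hb : A.boundary =
      Multiset.map (fun e => s(D.face e.1 e.2, D.face e.1 (e.2 + 1)))
        ((S.val.erase e₁).erase e₂)
      + {s(y₁, z₁), s(z₁, x₁), s(y₂, z₂), s(z₂, x₂)} := by
    show Multiset.map _ (Finset.univ.filter fun e : Fin (D.N+2) × Fin 3 =>
      aGlue D e₁ e₂ e = none).val = _
    rw [hfil, ← Finset.disjUnion_eq_union _ _ hdisj]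
    rw [show ((Finset.map (embF D) ((S.erase e₁).erase e₂)).disjUnion (F4 D) hdisj).val
      = (Finset.map (embF D) ((S.erase e₁).erase e₂)).val + (F4 D).val from rfl]
    erw [Multiset.map_add, Finset.map_val, Multiset.map_map]
    congr 1
    · rw [show ((S.erase e₁).erase e₂).val = (S.val.erase e₁).erase e₂ by
        rw [Finset.erase_val, Finset.erase_val]]
      apply Multiset.map_congr rfl
      intro f _
      show s(A.face (cst D f.1) f.2, A.face (cst D f.1) (f.2 + 1)) = _
      rw [hAface, aFace_cst]
    · show Multiset.map (fun e : Fin (D.N+2) × Fin 3 => s(aFace D x₁ y₁ z₁ x₂ y₂ z₂ e.1 e.2,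
        aFace D x₁ y₁ z₁ x₂ y₂ z₂ e.1 (e.2 + 1)))
        ({(nIdx D 0, 1), (nIdx D 0, 2), (nIdx D 1, 1), (nIdx D 1, 2)} :
        Multiset (Fin (D.N+2) × Fin 3)) = _
      simp only [Multiset.insert_eq_cons, Multiset.map_cons, Multiset.map_singleton, hAface,
        aFace_n0, aFace_n1, show ((1:Fin 3)+1) = 2 from rfl, show ((2:Fin 3)+1) = 0 from rfl]
      norm_num
      simp only [show (![x₁, y₁, z₁] 2) = z₁ from rfl, show (![x₂, y₂, z₂] 2) = z₂ from rfl]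
  -- peel off e₁ and e₂ from S.val
  have hS1 : S.val = e₁ ::ₘ (S.val.erase e₁) := (Multiset.cons_erase (by exact he₁S)).symm
  have hS2 : S.val.erase e₁ = e₂ ::ₘ ((S.val.erase e₁).erase e₂) := by
    refine (Multiset.cons_erase ?_).symm
    exact Multiset.mem_erase_of_ne hne.symm |>.mpr he₂S
  have hDb : D.boundary = s(x₁, y₁) ::ₘ s(x₂, y₂) ::ₘ
      Multiset.map (fun e => s(D.face e.1 e.2, D.face e.1 (e.2 + 1)))
        ((S.val.erase e₁).erase e₂) := by
    show Multiset.map _ S.val = _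
    conv_lhs => rw [hS1, hS2]
    rw [Multiset.map_cons, Multiset.map_cons, hs₁, hs₂]
  rw [hb, hDb]
  simp only [Multiset.insert_eq_cons, ← Multiset.singleton_add]
  ac_rfl

include hne hg₁ hg₂ hs₁ hs₂ hyz₁ hzx₁ hyz₂ hzx₂ in
lemma attachTwo_orientable (hori : D.Orientable) :
    (attachTwo D e₁ e₂ x₁ y₁ z₁ x₂ y₂ z₂ hne hg₁ hg₂ hs₁ hs₂ hyz₁ hzx₁ hyz₂ hzx₂).Orientable := by
  classical
  obtain ⟨ori, hOri⟩ := hori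
  set A := attachTwo D e₁ e₂ x₁ y₁ z₁ x₂ y₂ z₂ hne hg₁ hg₂ hs₁ hs₂ hyz₁ hzx₁ hyz₂ hzx₂ with hA
  have hAface : A.face = aFace D x₁ y₁ z₁ x₂ y₂ z₂ := rfl
  have hAglue : A.glue = aGlue D e₁ e₂ := rfl
  set d₁ := D.dirEdge ori e₁ with hd₁def
  set d₂ := D.dirEdge ori e₂ with hd₂def
  have hd₁ : d₁ = (x₁, y₁) ∨ d₁ = (y₁, x₁) := by
    have hsym : s(d₁.1, d₁.2) = s(x₁, y₁) := by
      rw [hd₁def, Dome.dirEdge]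
      split_ifs
      · exact hs₁
      · exact (Sym2.eq_swap).trans hs₁
    rcases Sym2.eq_iff.mp hsym with ⟨ha, hb⟩ | ⟨ha, hb⟩
    · left; exact Prod.ext ha hb
    · right; exact Prod.ext ha hb
  have hd₂ : d₂ = (x₂, y₂) ∨ d₂ = (y₂, x₂) := by
    have hsym : s(d₂.1, d₂.2) = s(x₂, y₂) := by
      rw [hd₂def, Dome.dirEdge]
      split_ifs
      · exact hs₂
      · exact (Sym2.eq_swap).trans hs₂
    rcases Sym2.eq_iff.mp hsym with ⟨ha, hb⟩ | ⟨ha, hb⟩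
    · left; exact Prod.ext ha hb
    · right; exact Prod.ext ha hb
  set b₁ : Bool := if d₁ = (x₁, y₁) then false else true with hb₁def
  set b₂ : Bool := if d₂ = (x₂, y₂) then false else true with hb₂def
  set ori' : Fin (D.N + 2) → Bool := fun a =>
    if h : (a : ℕ) < D.N then ori ⟨a, h⟩
    else if (a : ℕ) = D.N then b₁ else b₂ with hori'
  have hocst : ∀ b : Fin D.N, ori' (cst D b) = ori b := by
    intro b
    rw [hori']
    simp only [cst_coe]
    exact dif_pos b.2
  have hon0 : ori' (nIdx D 0) = b₁ := by
    simp only [hori']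
    have h1 : ¬ ((nIdx D 0 : Fin (D.N+2)) : ℕ) < D.N := by simp [nIdx]
    have h2 : ((nIdx D 0 : Fin (D.N+2)) : ℕ) = D.N := by simp [nIdx]
    rw [dif_neg h1, if_pos h2]
  have hon1 : ori' (nIdx D 1) = b₂ := by
    simp only [hori']
    have h1 : ¬ ((nIdx D 1 : Fin (D.N+2)) : ℕ) < D.N := by simp [nIdx]
    have h2 : ¬ ((nIdx D 1 : Fin (D.N+2)) : ℕ) = D.N := by simp [nIdx]
    rw [dif_neg h1, if_neg h2]
  have hde : ∀ f : Fin D.N × Fin 3, A.dirEdge ori' (cst D f.1, f.2) = D.dirEdge ori f := by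
    intro f
    unfold Dome.dirEdge
    simp only [hAface, hocst, aFace_cst]
  have hde0 : A.dirEdge ori' (nIdx D 0, 0) = Prod.swap d₁ := by
    unfold Dome.dirEdge
    simp only [hAface, hon0, aFace_n0, show ((0:Fin 3)+1) = 1 from rfl,
      Matrix.cons_val_zero, Matrix.cons_val_one, Matrix.head_cons]
    by_cases hc : d₁ = (x₁, y₁)
    · rw [hb₁def, if_pos hc, hc]
      simp
    · have : d₁ = (y₁, x₁) := hd₁.resolve_left hc
      rw [hb₁def, if_neg hc, this]
      simp
  have hde1 : A.dirEdge ori' (nIdx D 1, 0) = Prod.swap d₂ := by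
    unfold Dome.dirEdge
    simp only [hAface, hon1, aFace_n1, show ((0:Fin 3)+1) = 1 from rfl,
      Matrix.cons_val_zero, Matrix.cons_val_one, Matrix.head_cons]
    by_cases hc : d₂ = (x₂, y₂)
    · rw [hb₂def, if_pos hc, hc]
      simp
    · have : d₂ = (y₂, x₂) := hd₂.resolve_left hc
      rw [hb₂def, if_neg hc, this]
      simp
  refine ⟨ori', ?_⟩
  rintro ⟨a, i⟩ e' h
  rw [hAglue] at h
  rcases idx_cases D a with ⟨b, rfl⟩ | rfl | rfl
  · erw [aGlue_cst D e₁ e₂ (b, i)] at h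
    split_ifs at h with hb1 hb2
    · replace h := Option.some.inj h
      subst h
      erw [hde0, Prod.swap_swap, hde (b, i), hb1]
    · replace h := Option.some.inj h
      subst h
      erw [hde1, Prod.swap_swap, hde (b, i), hb2]
    · obtain ⟨f, hf, rfl⟩ := Option.map_eq_some_iff.mp h
      erw [hde (b, i), hde f]
      exact hOri (b, i) f hf
  · erw [aGlue_n0] at h
    split_ifs at h with hi
    · replace h := Option.some.inj h
      subst h
      subst hi
      erw [hde0, hde e₁]
  · erw [aGlue_n1] at h
    split_ifs at h with hi
    · replace h := Option.some.inj h
      subst h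
      subst hi
      erw [hde1, hde e₂]
end Attach


lemma twoFaces_boundary (T U : Fin 3 → E3) (hT : ∀ i, dist (T i) (T (i+1)) = 1)
    (hU : ∀ i, dist (U i) (U (i+1)) = 1) :
    (twoFaces T U hT hU).boundary =
      {s(T 0, T 1), s(T 1, T 2), s(T 2, T 0), s(U 0, U 1), s(U 1, U 2), s(U 2, U 0)} := by
  rw [Dome.boundary]
  simp only [twoFaces]
  rw [Finset.filter_true]
  have huniv : (Finset.univ : Finset (Fin 2 × Fin 3)).val
      = {(0,0),(0,1),(0,2),(1,0),(1,1),(1,2)} := by decide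
  erw [huniv]
  show Multiset.map _ _ = _
  simp only [Multiset.insert_eq_cons, Multiset.map_cons, Multiset.map_singleton]
  norm_num [twoFaces]
  constructor <;> intro i <;> fin_cases i <;> rfl

lemma tentDome_boundary (T U A B C W : Fin 3 → E3)
    (hT : ∀ i, dist (T i) (T (i+1)) = 1) (hU : ∀ i, dist (U i) (U (i+1)) = 1)
    (hA : ∀ i, dist (A i) (A (i+1)) = 1) (hB : ∀ i, dist (B i) (B (i+1)) = 1)
    (hC : ∀ i, dist (C i) (C (i+1)) = 1) (hW : ∀ i, dist (W i) (W (i+1)) = 1) :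
    (tentDome T U A B C W hT hU hA hB hC hW).boundary =
      {s(T 0, T 1), s(T 1, T 2), s(T 2, T 0), s(U 0, U 1), s(U 1, U 2), s(U 2, U 0),
       s(A 0, A 1), s(A 0, A 1), s(B 0, B 1), s(B 0, B 1),
       s(C 0, C 1), s(C 0, C 1), s(W 0, W 1), s(W 0, W 1)} := by
  rw [Dome.boundary]
  simp only [tentDome]
  have hfil : (Finset.univ.filter fun e : Fin 10 × Fin 3 => tglue e = none).val
      = ({((0:Fin 10),(0:Fin 3)),(0,1),(0,2),(1,0),(1,1),(1,2),
          (2,0),(3,0),(4,0),(5,0),(6,0),(7,0),(8,0),(9,0)} : Multiset (Fin 10 × Fin 3)) := by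
    decide
  erw [hfil]
  simp only [Multiset.insert_eq_cons, Multiset.map_cons, Multiset.map_singleton]
  norm_num
  simp only [← Multiset.singleton_add]
  ac_rfl

/-- vertex function of the hexagon `[v₄ v₃ v₂ v₂' v₃' v₄']` -/
def hexFun (v v' : Fin 4 → E3) : ℕ → E3 := fun k =>
  if k = 0 then v 3 else if k = 1 then v 2 else if k = 2 then v 1
  else if k = 3 then v' 1 else if k = 4 then v' 2 else v' 3

/-- Let `ρ = [v₁v₂v₃v₄]` and `ρ' = [v₁'v₂'v₃'v₄']` be unit
rhombi (here `v₁ = v 0, …, v₄ = v 3` and likewise for `v'`) positioned so that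
`v₁ = v₁'` and `|v₂ − v₂'| = |v₄ − v₄'| = 1`.  Then `ρ ∪ ρ'` is cobordant to
the single hexagonal integral curve `γ = [v₄v₃v₂v₂'v₃'v₄']`; a dome over
`ρ ∪ ρ' ∪ γ` is furnished by the two unit triangles `[v₁v₂v₂']` and
`[v₁v₄v₄']` together with paired boundary edges.  Consequently, if `ρ ∪ ρ'` is
not orientably cobordant to any unit rhombus, then neither is the connected
integral curve `γ`. -/
theorem two_rhombi_cobordant_to_hexagon (v v' : Fin 4 → E3)
    (hv : UnitRhombus v) (hv' : UnitRhombus v')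
    (h1 : v 0 = v' 0) (h2 : dist (v 1) (v' 1) = 1) (h4 : dist (v 3) (v' 3) = 1) :
    ∃ γ : IntegralCurve, γ.c = 1 ∧
      γ.edges = {s(v 3, v 2), s(v 2, v 1), s(v 1, v' 1),
                 s(v' 1, v' 2), s(v' 2, v' 3), s(v' 3, v 3)} ∧
      (∃ D : Dome, D.boundary = γ.edges + rhombusEdges v + rhombusEdges v') ∧
      (∃ (D : Dome) (P : Multiset (Sym2 E3)), D.N = 2 ∧
        (∀ a : Fin D.N,
          (∀ i, D.face a i = ![v 0, v 1, v' 1] i) ∨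
          (∀ i, D.face a i = ![v 0, v 3, v' 3] i)) ∧
        D.boundary + P + P = γ.edges + rhombusEdges v + rhombusEdges v') ∧
      ((∀ ρ₃ : Fin 4 → E3, UnitRhombus ρ₃ →
          ¬ ∃ D : Dome, D.Orientable ∧
              D.boundary = rhombusEdges v + rhombusEdges v' + rhombusEdges ρ₃) →
        ∀ ρ : Fin 4 → E3, UnitRhombus ρ →
          ¬ ∃ D : Dome, D.Orientable ∧ D.boundary = γ.edges + rhombusEdges ρ) := by
  classical
  -- apex points over the four "tent" edges
  obtain ⟨c₁, hc₁a, hc₁b⟩ := exists_apex (v 1) (v 2) (hv 1)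
  obtain ⟨c₂, hc₂a, hc₂b⟩ := exists_apex (v 2) (v 3) (hv 2)
  obtain ⟨c₃, hc₃a, hc₃b⟩ := exists_apex (v' 1) (v' 2) (hv' 1)
  obtain ⟨c₄, hc₄a, hc₄b⟩ := exists_apex (v' 2) (v' 3) (hv' 2)
  -- the hexagonal integral curve
  set γ : IntegralCurve :=
    { c := 1
      len := fun _ => 6
      len_pos := fun _ => by norm_num
      vert := fun _ i => hexFun v v' (i % 6)
      periodic := fun _ i => by
        show hexFun v v' ((i + 6) % 6) = hexFun v v' (i % 6)
        rw [Nat.add_mod_right]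
      unit := fun _ i => by
        show dist (hexFun v v' (i % 6)) (hexFun v v' ((i + 1) % 6)) = 1
        have h6 : (i + 1) % 6 = (i % 6 + 1) % 6 := by omega
        rcases (by omega : i % 6 = 0 ∨ i % 6 = 1 ∨ i % 6 = 2 ∨ i % 6 = 3 ∨ i % 6 = 4 ∨
          i % 6 = 5) with h | h | h | h | h | h <;> rw [h6, h]
        · show dist (v 3) (v 2) = 1
          rw [dist_comm]; exact hv 2
        · show dist (v 2) (v 1) = 1
          rw [dist_comm]; exact hv 1
        · exact h2
        · exact hv' 1
        · exact hv' 2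
        · show dist (v' 3) (v 3) = 1
          rw [dist_comm]; exact h4 } with hγ
  have hedges : γ.edges = {s(v 3, v 2), s(v 2, v 1), s(v 1, v' 1),
      s(v' 1, v' 2), s(v' 2, v' 3), s(v' 3, v 3)} := by
    show ∑ j : Fin 1, (Multiset.range 6).map
      (fun i => s(hexFun v v' (i % 6), hexFun v v' ((i + 1) % 6))) = _
    rw [Fin.sum_univ_one]
    rw [show (Multiset.range 6) = ({0, 1, 2, 3, 4, 5} : Multiset ℕ) from by decide]
    simp only [Multiset.insert_eq_cons, Multiset.map_cons, Multiset.map_singleton]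
    norm_num [hexFun]
  -- the two central triangles and four tents
  have hT : ∀ i : Fin 3, dist (![v 0, v 1, v' 1] i) (![v 0, v 1, v' 1] (i + 1)) = 1 := by
    intro i; fin_cases i
    · exact hv 0
    · exact h2
    · show dist (v' 1) (v 0) = 1
      rw [h1, dist_comm]; exact hv' 0
  have hU : ∀ i : Fin 3, dist (![v 0, v 3, v' 3] i) (![v 0, v 3, v' 3] (i + 1)) = 1 := by
    intro i; fin_cases i
    · show dist (v 0) (v 3) = 1
      rw [dist_comm]; exact hv 3
    · exact h4
    · show dist (v' 3) (v 0) = 1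
      rw [h1]; exact hv' 3
  have hA1 : ∀ i : Fin 3, dist (![v 1, v 2, c₁] i) (![v 1, v 2, c₁] (i + 1)) = 1 := by
    intro i; fin_cases i
    · exact hv 1
    · exact hc₁b
    · show dist c₁ (v 1) = 1
      rw [dist_comm]; exact hc₁a
  have hA2 : ∀ i : Fin 3, dist (![v 2, v 3, c₂] i) (![v 2, v 3, c₂] (i + 1)) = 1 := by
    intro i; fin_cases i
    · exact hv 2
    · exact hc₂b
    · show dist c₂ (v 2) = 1
      rw [dist_comm]; exact hc₂a
  have hA3 : ∀ i : Fin 3, dist (![v' 1, v' 2, c₃] i) (![v' 1, v' 2, c₃] (i + 1)) = 1 := by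
    intro i; fin_cases i
    · exact hv' 1
    · exact hc₃b
    · show dist c₃ (v' 1) = 1
      rw [dist_comm]; exact hc₃a
  have hA4 : ∀ i : Fin 3, dist (![v' 2, v' 3, c₄] i) (![v' 2, v' 3, c₄] (i + 1)) = 1 := by
    intro i; fin_cases i
    · exact hv' 2
    · exact hc₄b
    · show dist c₄ (v' 2) = 1
      rw [dist_comm]; exact hc₄a
  -- rhombus edge multisets
  have hrv : rhombusEdges v = {s(v 0, v 1), s(v 1, v 2), s(v 2, v 3), s(v 3, v 0)} := by
    rw [rhombusEdges, show (Finset.univ : Finset (Fin 4)).val = ({0, 1, 2, 3} : Multiset (Fin 4))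
      from by decide]
    simp only [Multiset.insert_eq_cons, Multiset.map_cons, Multiset.map_singleton,
      show ((0:Fin 4)+1) = 1 from rfl, show ((1:Fin 4)+1) = 2 from rfl,
      show ((2:Fin 4)+1) = 3 from rfl, show ((3:Fin 4)+1) = 0 from rfl]
  have hrv' : rhombusEdges v' = {s(v' 0, v' 1), s(v' 1, v' 2), s(v' 2, v' 3), s(v' 3, v' 0)} := by
    rw [rhombusEdges, show (Finset.univ : Finset (Fin 4)).val = ({0, 1, 2, 3} : Multiset (Fin 4))
      from by decide]
    simp only [Multiset.insert_eq_cons, Multiset.map_cons, Multiset.map_singleton,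
      show ((0:Fin 4)+1) = 1 from rfl, show ((1:Fin 4)+1) = 2 from rfl,
      show ((2:Fin 4)+1) = 3 from rfl, show ((3:Fin 4)+1) = 0 from rfl]
  refine ⟨γ, rfl, hedges, ?_, ?_, ?_⟩
  · -- a dome over γ ∪ ρ ∪ ρ'
    refine ⟨tentDome ![v 0, v 1, v' 1] ![v 0, v 3, v' 3] ![v 1, v 2, c₁] ![v 2, v 3, c₂]
      ![v' 1, v' 2, c₃] ![v' 2, v' 3, c₄] hT hU hA1 hA2 hA3 hA4, ?_⟩
    rw [tentDome_boundary, hedges, hrv, hrv', ← h1]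
    norm_num
    simp only [show (![v 0, v 1, v' 1] 2) = v' 1 from rfl, show (![v 0, v 3, v' 3] 2) = v' 3 from rfl]
    rw [show s(v 3, v 2) = s(v 2, v 3) from Sym2.eq_swap,
      show s(v 2, v 1) = s(v 1, v 2) from Sym2.eq_swap,
      show s(v' 3, v 3) = s(v 3, v' 3) from Sym2.eq_swap,
      show s(v 3, v 0) = s(v 0, v 3) from Sym2.eq_swap,
      show s(v' 1, v 0) = s(v 0, v' 1) from Sym2.eq_swap]
    simp only [Multiset.insert_eq_cons, ← Multiset.singleton_add]
    ac_rfl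
  · -- the two-triangle dome with paired edges
    refine ⟨twoFaces ![v 0, v 1, v' 1] ![v 0, v 3, v' 3] hT hU,
      {s(v 1, v 2), s(v 2, v 3), s(v' 1, v' 2), s(v' 2, v' 3)}, rfl, ?_, ?_⟩
    · intro a
      fin_cases a
      · left; intro i; rfl
      · right; intro i; rfl
    · rw [twoFaces_boundary, hedges, hrv, hrv', ← h1]
      norm_num
      simp only [show (![v 0, v 1, v' 1] 2) = v' 1 from rfl, show (![v 0, v 3, v' 3] 2) = v' 3 from rfl]
      rw [show s(v 3, v 2) = s(v 2, v 3) from Sym2.eq_swap,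
        show s(v 2, v 1) = s(v 1, v 2) from Sym2.eq_swap,
        show s(v' 3, v 3) = s(v 3, v' 3) from Sym2.eq_swap,
        show s(v 3, v 0) = s(v 0, v 3) from Sym2.eq_swap,
        show s(v' 1, v 0) = s(v 0, v' 1) from Sym2.eq_swap]
      simp only [Multiset.insert_eq_cons, ← Multiset.singleton_add]
      ac_rfl
  · -- non-cobordance transfer
    intro H ρ hρ
    rintro ⟨D, hD, hBnd⟩
    rw [hedges] at hBnd
    have hle : ({s(v 1, v' 1), s(v 3, v' 3)} : Multiset (Sym2 E3)) ≤ D.boundary := by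
      rw [hBnd]
      refine Multiset.le_iff_exists_add.mpr
        ⟨{s(v 3, v 2), s(v 2, v 1), s(v' 1, v' 2), s(v' 2, v' 3)} + rhombusEdges ρ, ?_⟩
      rw [show s(v' 3, v 3) = s(v 3, v' 3) from Sym2.eq_swap]
      simp only [Multiset.insert_eq_cons, ← Multiset.singleton_add]
      ac_rfl
    obtain ⟨e₁, e₂, he₁, he₂, hneq, hf₁, hf₂⟩ :=
      exists_two_preimages
        (Finset.univ.filter fun e : Fin D.N × Fin 3 => D.glue e = none).val
        (Finset.nodup _)
        (fun e => s(D.face e.1 e.2, D.face e.1 (e.2 + 1)))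
        (s(v 1, v' 1)) (s(v 3, v' 3)) hle
    have hg₁' : D.glue e₁ = none := (Finset.mem_filter.mp (Finset.mem_def.mpr he₁)).2
    have hg₂' : D.glue e₂ = none := (Finset.mem_filter.mp (Finset.mem_def.mpr he₂)).2
    have d1 : dist (v' 1) (v 0) = 1 := by rw [h1, dist_comm]; exact hv' 0
    have d2 : dist (v 0) (v 1) = 1 := hv 0
    have d3 : dist (v' 3) (v 0) = 1 := by rw [h1]; exact hv' 3
    have d4 : dist (v 0) (v 3) = 1 := by rw [dist_comm]; exact hv 3
    have hbd := attachTwo_boundary D e₁ e₂ (v 1) (v' 1) (v 0) (v 3) (v' 3) (v 0)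
      hneq hg₁' hg₂' hf₁ hf₂ d1 d2 d3 d4
    have hfin : (attachTwo D e₁ e₂ (v 1) (v' 1) (v 0) (v 3) (v' 3) (v 0)
        hneq hg₁' hg₂' hf₁ hf₂ d1 d2 d3 d4).boundary
        = rhombusEdges v + rhombusEdges v' + rhombusEdges ρ := by
      have h' : (attachTwo D e₁ e₂ (v 1) (v' 1) (v 0) (v 3) (v' 3) (v 0)
          hneq hg₁' hg₂' hf₁ hf₂ d1 d2 d3 d4).boundary + {s(v 1, v' 1), s(v 3, v' 3)}
          = (rhombusEdges v + rhombusEdges v' + rhombusEdges ρ)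
            + {s(v 1, v' 1), s(v 3, v' 3)} := by
        rw [hbd, hBnd, hrv, hrv', ← h1]
        rw [show s(v 3, v 2) = s(v 2, v 3) from Sym2.eq_swap,
          show s(v 2, v 1) = s(v 1, v 2) from Sym2.eq_swap,
          show s(v' 3, v 3) = s(v 3, v' 3) from Sym2.eq_swap,
          show s(v 3, v 0) = s(v 0, v 3) from Sym2.eq_swap,
          show s(v' 1, v 0) = s(v 0, v' 1) from Sym2.eq_swap]
        simp only [Multiset.insert_eq_cons, ← Multiset.singleton_add]
        ac_rfl
      exact add_right_cancel h'
    exact H ρ hρ ⟨attachTwo D e₁ e₂ (v 1) (v' 1) (v 0) (v 3) (v' 3) (v 0)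
      hneq hg₁' hg₂' hf₁ hf₂ d1 d2 d3 d4,
      attachTwo_orientable D e₁ e₂ (v 1) (v' 1) (v 0) (v 3) (v' 3) (v 0)
        hneq hg₁' hg₂' hf₁ hf₂ d1 d2 d3 d4 hD, hfin⟩
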